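/- Let p be a polynomial of degree s with critical values v₁, …, v_{s−1}. Let Γ : [0,2π] → ℂ be continuous and suppose p(c) ≠ Γ(t) for every critical point c of p and every t ∈ [0,2π]. Then the set {(u, t) ∈ ℂ × [0,2π] : p(u) = Γ(t)} is a disjoint union of s continuous curves, each parametrized by t; i.e., there exist continuous functions z₁, …, z_s : [0,2π] → ℂ, pairwise disjoint, such that for each t the roots of p(u) − Γ(t) are exactly z₁(t), …, z_s(t). -/

import Mathlib

open Real Set Polynomial

lemma aux_roots (s : ℕ) (hs : 1 ≤ s) (p : Polynomial ℂ) (hdeg : p.natDegree = s)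
    (w : ℂ) (hw : ∀ c : ℂ, p.derivative.eval c = 0 → p.eval c ≠ w) :
    ∃ v : Fin s → ℂ, Function.Injective v ∧ ∀ u : ℂ, p.eval u = w ↔ ∃ j, u = v j := by
  set q := p - C w with hq
  have hqd : q.natDegree = s := by rw [hq, natDegree_sub_C, hdeg]
  have hq0 : q ≠ 0 := by
    intro h
    rw [h, natDegree_zero] at hqd
    omega
  have hroot : ∀ u : ℂ, p.eval u = w ↔ q.eval u = 0 := by
    intro u; rw [hq]; simp [sub_eq_zero]
  have hcard : q.roots.card = s := by
    rw [← hqd]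
    exact splits_iff_card_roots.mp (IsAlgClosed.splits q)
  have hnodup : q.roots.Nodup := by
    rw [Multiset.nodup_iff_count_le_one]
    intro a
    by_contra h
    have h2 : 1 < q.rootMultiplicity a := by rw [← count_roots]; omega
    rw [one_lt_rootMultiplicity_iff_isRoot hq0] at h2
    have hda : p.derivative.eval a = 0 := by
      have := h2.2
      simpa [hq, IsRoot] using this
    have hpa : p.eval a = w := by
      have := h2.1
      rw [IsRoot, ← hroot] at this
      exact this
    exact hw a hda hpa
  set l := q.roots.toList with hl
  have hlnodup : l.Nodup := by
    rw [hl]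
    have := hnodup
    rw [← Multiset.coe_toList q.roots] at this
    exact Multiset.coe_nodup.mp this
  have hlen : l.length = s := by rw [hl, Multiset.length_toList, hcard]
  refine ⟨fun j => l.get (Fin.cast hlen.symm j), ?_, ?_⟩
  · intro j k hjk
    have := List.nodup_iff_injective_get.mp hlnodup hjk
    exact Fin.cast_injective hlen.symm (by simpa using this)
  · intro u
    rw [hroot]
    constructor
    · intro hu
      have : u ∈ q.roots := by rw [mem_roots hq0]; exact hu
      rw [← Multiset.mem_toList, ← hl, List.mem_iff_get] at this
      obtain ⟨n, hn⟩ := this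
      exact ⟨Fin.cast hlen n, by simp [hn.symm]⟩
    · rintro ⟨j, rfl⟩
      have : l.get (Fin.cast hlen.symm j) ∈ q.roots := by
        rw [← Multiset.mem_toList, ← hl]
        exact l.get_mem _
      exact (mem_roots hq0).mp this

lemma aux_fiber (s : ℕ) (hs : 1 ≤ s) (p : Polynomial ℂ) (hdeg : p.natDegree = s)
    (w : ℂ) (hw : ∀ c : ℂ, p.derivative.eval c = 0 → p.eval c ≠ w)
    (x : Fin s → ℂ) (hinj : ∀ j k : Fin s, j ≠ k → x j ≠ x k)
    (hroot : ∀ j, p.eval (x j) = w) :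
    ∀ u : ℂ, p.eval u = w ↔ ∃ j, u = x j := by
  obtain ⟨v, hvinj, hv⟩ := aux_roots s hs p hdeg w hw
  have hφ : ∀ j : Fin s, ∃ k, x j = v k := fun j => (hv (x j)).mp (hroot j)
  choose φ hφ using hφ
  have hφinj : Function.Injective φ := by
    intro j j' h
    by_contra hne
    exact hinj j j' hne (by rw [hφ j, hφ j', h])
  have hφsurj : Function.Surjective φ := Finite.surjective_of_injective hφinj
  intro u
  rw [hv u]
  constructor
  · rintro ⟨k, rfl⟩
    obtain ⟨j, rfl⟩ := hφsurj k
    exact ⟨j, (hφ j).symm⟩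
  · rintro ⟨j, rfl⟩
    exact ⟨φ j, hφ j⟩

lemma aux_inv (p : Polynomial ℂ) (u₀ : ℂ) (hd : p.derivative.eval u₀ ≠ 0) :
    ∃ g : ℂ → ℂ, ∃ V : Set ℂ, IsOpen V ∧ p.eval u₀ ∈ V ∧ ContinuousOn g V ∧
      g (p.eval u₀) = u₀ ∧ ∀ w ∈ V, p.eval (g w) = w := by
  have hsd : HasStrictDerivAt (fun x => p.eval x) (p.derivative.eval u₀) u₀ :=
    p.hasStrictDerivAt u₀
  have hf := hsd.hasStrictFDerivAt_equiv hd
  set e := hf.toOpenPartialHomeomorph _ with he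
  have hcoe : ⇑e = fun x => p.eval x := hf.toOpenPartialHomeomorph_coe
  refine ⟨e.symm, e.target, e.open_target, ?_, e.continuousOn_symm, ?_, ?_⟩
  · exact hf.image_mem_toOpenPartialHomeomorph_target
  · exact e.left_inv hf.mem_toOpenPartialHomeomorph_source
  · intro w hwmem
    have := e.right_inv hwmem
    rw [hcoe] at this
    exact this

def IsLiftOn (s : ℕ) (p : Polynomial ℂ) (Γ : ℝ → ℂ) (S : Set ℝ) (z : Fin s → ℝ → ℂ) : Prop :=
  (∀ j, ContinuousOn (z j) S) ∧ (∀ t ∈ S, ∀ j k : Fin s, j ≠ k → z j t ≠ z k t) ∧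
  (∀ t ∈ S, ∀ u : ℂ, p.eval u = Γ t ↔ ∃ j, u = z j t)

lemma IsLiftOn.mono {s p Γ} {S T : Set ℝ} {z} (h : IsLiftOn s p Γ S z) (hTS : T ⊆ S) :
    IsLiftOn s p Γ T z :=
  ⟨fun j => (h.1 j).mono hTS, fun t ht => h.2.1 t (hTS ht), fun t ht => h.2.2 t (hTS ht)⟩

lemma aux_local (s : ℕ) (hs : 1 ≤ s) (p : Polynomial ℂ) (hdeg : p.natDegree = s)
    (Γ : ℝ → ℂ) (hΓ : ContinuousOn Γ (Icc 0 (2 * π)))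
    (hreg : ∀ c : ℂ, p.derivative.eval c = 0 → ∀ t ∈ Icc 0 (2 * π), p.eval c ≠ Γ t)
    (t₀ : ℝ) (ht₀ : t₀ ∈ Icc 0 (2 * π)) :
    ∃ ε > 0, ∃ z, IsLiftOn s p Γ (Icc 0 (2 * π) ∩ Metric.ball t₀ ε) z := by
  set w₀ := Γ t₀ with hw₀
  have hw : ∀ c : ℂ, p.derivative.eval c = 0 → p.eval c ≠ w₀ :=
    fun c hc => hreg c hc t₀ ht₀
  obtain ⟨v, hvinj, hv⟩ := aux_roots s hs p hdeg w₀ hw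
  have hvroot : ∀ j, p.eval (v j) = w₀ := fun j => (hv (v j)).mpr ⟨j, rfl⟩
  have hvd : ∀ j, p.derivative.eval (v j) ≠ 0 := by
    intro j hc
    exact hw (v j) hc (hvroot j)
  -- local inverses
  have hinv := fun j => aux_inv p (v j) (hvd j)
  choose g V hVopen hVmem hgcont hgval hginv using hinv
  simp only [hvroot] at hVmem hgval
  -- eventual statement
  have hgj : ∀ j, Filter.Tendsto (g j) (nhds w₀) (nhds (v j)) := by
    intro j
    have := (hgcont j).continuousAt ((hVopen j).mem_nhds (hVmem j))
    rw [ContinuousAt, hgval j] at this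
    exact this
  have hE : ∀ᶠ w in nhds w₀, (∀ j, w ∈ V j) ∧ ∀ j k : Fin s, j ≠ k → g j w ≠ g k w := by
    refine Filter.Eventually.and ?_ ?_
    · rw [Filter.eventually_all]
      exact fun j => (hVopen j).mem_nhds (hVmem j)
    · rw [Filter.eventually_all]
      intro j
      rw [Filter.eventually_all]
      intro k
      by_cases hjk : j = k
      · exact Filter.Eventually.of_forall fun w h => absurd hjk h
      · have hne : v j ≠ v k := fun h => hjk (hvinj h)
        have htend : Filter.Tendsto (fun w => (g j w, g k w)) (nhds w₀) (nhds (v j, v k)) :=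
          (hgj j).prodMk_nhds (hgj k)
        have hmem : {q : ℂ × ℂ | q.1 ≠ q.2} ∈ nhds (v j, v k) :=
          isClosed_diagonal.isOpen_compl.mem_nhds (by exact hne)
        filter_upwards [htend hmem] with w hwne
        exact fun _ => hwne
  obtain ⟨W, hWsub, hWopen, hWmem⟩ := eventually_nhds_iff.mp hE
  -- pull back along Γ
  have hΓt₀ : ContinuousWithinAt Γ (Icc 0 (2 * π)) t₀ := hΓ t₀ ht₀
  have hpre : Γ ⁻¹' W ∈ nhdsWithin t₀ (Icc 0 (2 * π)) := hΓt₀ (hWopen.mem_nhds hWmem)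
  rw [Metric.mem_nhdsWithin_iff] at hpre
  obtain ⟨ε, hεpos, hεsub⟩ := hpre
  refine ⟨ε, hεpos, fun j t => g j (Γ t), ?_, ?_, ?_⟩
  · intro j
    exact ContinuousOn.comp (t := W) ((hgcont j).mono (fun w hwW => (hWsub w hwW).1 j))
      (hΓ.mono inter_subset_left) (fun t ht => hεsub ⟨ht.2, ht.1⟩)
  · intro t ht j k hjk
    exact (hWsub _ (hεsub ⟨ht.2, ht.1⟩)).2 j k hjk
  · intro t ht
    have hΓtW : Γ t ∈ W := hεsub ⟨ht.2, ht.1⟩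
    refine aux_fiber s hs p hdeg (Γ t) (fun c hc => hreg c hc t ht.1) _ ?_ ?_
    · exact fun j k hjk => (hWsub _ hΓtW).2 j k hjk
    · exact fun j => hginv j _ ((hWsub _ hΓtW).1 j)

lemma aux_union_closed {f : ℝ → ℂ} {A B : Set ℝ} (hA : IsClosed A) (hB : IsClosed B)
    (h1 : ContinuousOn f A) (h2 : ContinuousOn f B) : ContinuousOn f (A ∪ B) := by
  intro x hx
  have hA' : ContinuousWithinAt f A x := by
    by_cases hxA : x ∈ A
    · exact h1 x hxA
    · exact continuousWithinAt_of_notMem_closure (by rwa [hA.closure_eq])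
  have hB' : ContinuousWithinAt f B x := by
    by_cases hxB : x ∈ B
    · exact h2 x hxB
    · exact continuousWithinAt_of_notMem_closure (by rwa [hB.closure_eq])
  exact hA'.union hB'

lemma aux_glue (s : ℕ) (p : Polynomial ℂ) (Γ : ℝ → ℂ) {a b c : ℝ} (hab : a ≤ b) (hbc : b ≤ c)
    {z y : Fin s → ℝ → ℂ} (hz : IsLiftOn s p Γ (Icc a b) z) (hy : IsLiftOn s p Γ (Icc b c) y) :
    ∃ w, IsLiftOn s p Γ (Icc a c) w := by
  have hbab : b ∈ Icc a b := ⟨hab, le_refl b⟩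
  have hbbc : b ∈ Icc b c := ⟨le_refl b, hbc⟩
  have hσ : ∀ j : Fin s, ∃ k, z j b = y k b := by
    intro j
    have hroot : p.eval (z j b) = Γ b := (hz.2.2 b hbab (z j b)).mpr ⟨j, rfl⟩
    exact (hy.2.2 b hbbc (z j b)).mp hroot
  choose σ hσ using hσ
  have hσinj : Function.Injective σ := by
    intro j j' h
    by_contra hne
    exact hz.2.1 b hbab j j' hne (by rw [hσ j, hσ j', h])
  have hσsurj : Function.Surjective σ := Finite.surjective_of_injective hσinj
  refine ⟨fun j t => if t ≤ b then z j t else y (σ j) t, ?_, ?_, ?_⟩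
  · intro j
    rw [← Icc_union_Icc_eq_Icc hab hbc]
    refine aux_union_closed isClosed_Icc isClosed_Icc ?_ ?_
    · exact (hz.1 j).congr fun t ht => if_pos ht.2
    · refine (hy.1 (σ j)).congr fun t ht => ?_
      show (if t ≤ b then z j t else y (σ j) t) = y (σ j) t
      by_cases htb : t ≤ b
      · have : t = b := le_antisymm htb ht.1
        rw [if_pos htb, this, hσ j]
      · rw [if_neg htb]
  · intro t ht j k hjk
    by_cases htb : t ≤ b
    · simp only [if_pos htb]
      exact hz.2.1 t ⟨ht.1, htb⟩ j k hjk
    · simp only [if_neg htb]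
      exact hy.2.1 t ⟨le_of_not_ge htb, ht.2⟩ (σ j) (σ k) fun h => hjk (hσinj h)
  · intro t ht u
    by_cases htb : t ≤ b
    · simp only [if_pos htb]
      exact hz.2.2 t ⟨ht.1, htb⟩ u
    · simp only [if_neg htb]
      rw [hy.2.2 t ⟨le_of_not_ge htb, ht.2⟩ u]
      constructor
      · rintro ⟨k, rfl⟩
        obtain ⟨j, rfl⟩ := hσsurj k
        exact ⟨j, rfl⟩
      · rintro ⟨j, rfl⟩
        exact ⟨σ j, rfl⟩

theorem stmt_16 (s : ℕ) (hs : 1 ≤ s) (p : Polynomial ℂ) (hdeg : p.natDegree = s)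
    (Γ : ℝ → ℂ) (hΓ : ContinuousOn Γ (Icc 0 (2 * π)))
    (hreg : ∀ c : ℂ, p.derivative.eval c = 0 → ∀ t ∈ Icc 0 (2 * π), p.eval c ≠ Γ t) :
    ∃ z : Fin s → ℝ → ℂ,
      (∀ j, ContinuousOn (z j) (Icc 0 (2 * π))) ∧
      (∀ t ∈ Icc 0 (2 * π), ∀ j k : Fin s, j ≠ k → z j t ≠ z k t) ∧
      (∀ t ∈ Icc 0 (2 * π), ∀ u : ℂ, (p.eval u = Γ t ↔ ∃ j, u = z j t)) := by
  have h2π : (0:ℝ) ≤ 2 * π := by positivity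
  have H : ∀ t₀ : Icc 0 (2*π), ∃ ε > 0, ∃ z, IsLiftOn s p Γ (Icc 0 (2*π) ∩ Metric.ball ↑t₀ ε) z :=
    fun t₀ => aux_local s hs p hdeg Γ hΓ hreg t₀ t₀.2
  choose ε hεpos zfun hzfun using H
  have hcover : Icc (0:ℝ) (2*π) ⊆ ⋃ i : Icc (0:ℝ) (2*π), Metric.ball (i:ℝ) (ε i) := by
    intro x hx
    exact mem_iUnion.mpr ⟨⟨x, hx⟩, Metric.mem_ball_self (hεpos ⟨x, hx⟩)⟩
  obtain ⟨δ, hδpos, hδ⟩ :=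
    lebesgue_number_lemma_of_metric isCompact_Icc (fun i => Metric.isOpen_ball) hcover
  have key : ∀ a' b' : ℝ, a' ∈ Icc 0 (2*π) → b' ∈ Icc 0 (2*π) → a' ≤ b' → b' - a' < δ →
      ∃ z, IsLiftOn s p Γ (Icc a' b') z := by
    intro a' b' ha' hb' hab hlen
    obtain ⟨i, hi⟩ := hδ a' ha'
    refine ⟨zfun i, (hzfun i).mono ?_⟩
    intro t ht
    refine ⟨⟨le_trans ha'.1 ht.1, le_trans ht.2 hb'.2⟩, hi ?_⟩
    rw [Metric.mem_ball, Real.dist_eq, abs_sub_lt_iff]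
    cases' ht with h1 h2
    constructor <;> linarith
  set m : ℕ → ℝ := fun k => min (k * (δ/2)) (2*π) with hm
  have hm0 : m 0 = 0 := by simp [hm, h2π]
  have hmmem : ∀ k, m k ∈ Icc (0:ℝ) (2*π) :=
    fun k => ⟨le_min (by positivity) h2π, min_le_right _ _⟩
  have hmono : ∀ k, m k ≤ m (k+1) := by
    intro k
    refine min_le_min ?_ le_rfl
    have hk : (k:ℝ) ≤ (k:ℝ) + 1 := by linarith
    push_cast
    nlinarith
  have hstep : ∀ k, m (k+1) - m k < δ := by
    intro k
    have h1 : m (k+1) ≤ m k + δ/2 := by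
      have : m (k+1) ≤ min (k * (δ/2) + δ/2) (2*π + δ/2) := by
        refine min_le_min (le_of_eq ?_) (by linarith)
        push_cast
        ring
      rwa [min_add_add_right] at this
    linarith
  have main : ∀ k, ∃ z, IsLiftOn s p Γ (Icc 0 (m k)) z := by
    intro k
    induction k with
    | zero =>
      rw [hm0]
      exact key 0 0 ⟨le_rfl, h2π⟩ ⟨le_rfl, h2π⟩ le_rfl (by linarith)
    | succ k ih =>
      obtain ⟨z, hzk⟩ := ih
      obtain ⟨y, hyk⟩ := key (m k) (m (k+1)) (hmmem k) (hmmem (k+1)) (hmono k) (hstep k)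
      exact aux_glue s p Γ (hmmem k).1 (hmono k) hzk hyk
  obtain ⟨k, hk⟩ := exists_nat_ge (2*π / (δ/2))
  have hk2 : 2*π ≤ (k:ℝ) * (δ/2) := by
    rw [div_le_iff₀ (by linarith)] at hk
    linarith
  obtain ⟨z, hzfin⟩ := main k
  have hmk : m k = 2*π := min_eq_right hk2
  rw [hmk] at hzfin
  exact ⟨z, hzfin.1, hzfin.2.1, hzfin.2.2⟩
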